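/- arXiv:1706.04988 — 3 statements merged into one kernel-verified Lean document; each statement's English description precedes it below -/
import Mathlib

section
/- Let $r \geq 1$ and let $n_i \geq 1$, $a_i, m_i, b_i, c_i, k \geq 0$ be integers for $1 \leq i \leq r$ satisfying: (i) $a_i = \max\{m_i, n_i b_i\}$; (ii) $c_i = \max\{k, b_i\}$ whenever $k \neq b_i$; (iii) $c_i \leq b_i$ whenever $k = b_i$. Set $n = \sum_i n_i$ and $\Omega = \{i : a_i > n_i k\}$. Then $\sum_{i=1}^r m_i \;\leq\; \sum_{i=1}^r \max\{m_i, n_i c_i\} \;\leq\; \sum_{i=1}^r a_i + k\Big(n - \sum_{i \in \Omega} n_i\Big)$. -/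
open Finset in
/-- Two-sided conductor bound:
`∑ mᵢ ≤ ∑ max{mᵢ, nᵢcᵢ} ≤ ∑ aᵢ + k(n - ∑_{i∈Ω} nᵢ)` where `Ω = {i : aᵢ > nᵢk}`. -/
theorem conductor_two_sided_bound (r : ℕ) (hr : 1 ≤ r)
    (n a m b c : Fin r → ℕ) (k : ℕ) (hn : ∀ i, 1 ≤ n i)
    (h1 : ∀ i, a i = max (m i) (n i * b i))
    (h2 : ∀ i, k ≠ b i → c i = max k (b i))
    (h3 : ∀ i, k = b i → c i ≤ b i) :
    (∑ i, m i) ≤ (∑ i, max (m i) (n i * c i)) ∧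
    (∑ i, max (m i) (n i * c i)) ≤
      (∑ i, a i) + k * ((∑ i, n i) - ∑ i ∈ univ.filter (fun i => n i * k < a i), n i) := by
  constructor
  · exact Finset.sum_le_sum fun i _ => le_max_left _ _
  · have key : ∀ i, max (m i) (n i * c i) ≤
        a i + (if n i * k < a i then 0 else k * n i) := by
      intro i
      have hm : m i ≤ a i := (h1 i) ▸ le_max_left _ _
      have hb : n i * b i ≤ a i := (h1 i) ▸ le_max_right _ _
      by_cases hkb : k = b i
      · have hc : n i * c i ≤ n i * b i := Nat.mul_le_mul_left _ (h3 i hkb)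
        have : max (m i) (n i * c i) ≤ a i := max_le hm (hc.trans hb)
        omega
      · rw [h2 i hkb]
        rcases max_cases k (b i) with ⟨hcv, _⟩ | ⟨hcv, _⟩ <;> rw [hcv]
        · by_cases hO : n i * k < a i
          · simp only [hO, if_true]
            have : max (m i) (n i * k) ≤ a i := max_le hm (le_of_lt hO)
            omega
          · simp only [hO, if_false]
            have : n i * k = k * n i := Nat.mul_comm _ _
            omega
        · have : max (m i) (n i * b i) ≤ a i := max_le hm hb
          omega
    calc (∑ i, max (m i) (n i * c i))
        ≤ ∑ i, (a i + (if n i * k < a i then 0 else k * n i)) :=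
          Finset.sum_le_sum fun i _ => key i
      _ = (∑ i, a i) + ∑ i, (if n i * k < a i then 0 else k * n i) :=
          Finset.sum_add_distrib
      _ = (∑ i, a i) + k * ((∑ i, n i) - ∑ i ∈ univ.filter (fun i => n i * k < a i), n i) := by
          congr 1
          have hsplit := Finset.sum_filter_add_sum_filter_not Finset.univ
            (fun i => n i * k < a i) n
          have hle : (∑ i ∈ univ.filter (fun i => n i * k < a i), n i) ≤ ∑ i, n i :=
            Finset.sum_le_sum_of_subset (Finset.filter_subset _ _)
          have hsub : (∑ i, n i) - (∑ i ∈ univ.filter (fun i => n i * k < a i), n i)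
              = ∑ i ∈ univ.filter (fun i => ¬ (n i * k < a i)), n i := by omega
          rw [hsub, Finset.mul_sum, Finset.sum_filter]
          apply Finset.sum_congr rfl
          intro i _
          by_cases hO : n i * k < a i <;> simp [hO]
end

section
/- Let $r \geq 1$ and let $n_i \geq 1$, $a_i, m_i, b_i, c_i, k \geq 0$ be integers for $1 \leq i \leq r$ satisfying: (i) $a_i = \max\{m_i, n_i b_i\}$; (ii) $c_i = \max\{k, b_i\}$ whenever $k \neq b_i$; (iii) $c_i \leq b_i$ whenever $k = b_i$. Set $n = \sum_i n_i$, $A = \sum_i a_i$. Then $\sum_{i=1}^r \max\{m_i, n_i c_i\} \;\leq\; \max\{A, k\} + (n-1)k$. -/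
lemma bh_mul_split (r k : ℕ) (h : 1 ≤ r) : r * k = k + (r - 1) * k := by
  cases r with
  | zero => omega
  | succ t => rw [Nat.succ_sub_one, Nat.succ_mul]; omega

lemma bh_sum_max_aux (r : ℕ) (hr : 1 ≤ r) (a : Fin r → ℕ) (k : ℕ) :
    ∑ i, max (a i) k ≤ max (∑ i, a i) k + (r - 1) * k := by
  by_cases h : ∃ i, k ≤ a i
  · obtain ⟨i₀, hi₀⟩ := h
    have hsplit : ∑ i, max (a i) k
        = max (a i₀) k + ∑ i ∈ Finset.univ.erase i₀, max (a i) k :=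
      (Finset.add_sum_erase _ _ (Finset.mem_univ i₀)).symm
    have hsplit2 : ∑ i, a i = a i₀ + ∑ i ∈ Finset.univ.erase i₀, a i :=
      (Finset.add_sum_erase _ _ (Finset.mem_univ i₀)).symm
    have hb : ∑ i ∈ Finset.univ.erase i₀, max (a i) k
        ≤ ∑ i ∈ Finset.univ.erase i₀, (a i + k) :=
      Finset.sum_le_sum (fun i _ => by omega)
    have hcard : (Finset.univ.erase i₀).card = r - 1 := by
      rw [Finset.card_erase_of_mem (Finset.mem_univ i₀)]
      simp
    have hsum : ∑ i ∈ Finset.univ.erase i₀, (a i + k)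
        = (∑ i ∈ Finset.univ.erase i₀, a i) + (r - 1) * k := by
      rw [Finset.sum_add_distrib, Finset.sum_const, hcard, smul_eq_mul]
    have hmax : max (a i₀) k = a i₀ := max_eq_left hi₀
    have hle : ∑ i, a i ≤ max (∑ i, a i) k := le_max_left _ _
    omega
  · push_neg at h
    have : ∀ i ∈ Finset.univ, max (a i) k = k := fun i _ => max_eq_right (le_of_lt (h i))
    rw [Finset.sum_congr rfl this, Finset.sum_const, Finset.card_univ, Fintype.card_fin,
      smul_eq_mul]
    have hk : k ≤ max (∑ i, a i) k := le_max_right _ _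
    have : r * k = k + (r - 1) * k := bh_mul_split r k hr
    omega

/-- Bushnell–Henniart bound: `∑ max{mᵢ, nᵢcᵢ} ≤ max{A, k} + (n-1)k`. -/
theorem bushnell_henniart_bound (r : ℕ) (hr : 1 ≤ r)
    (n a m b c : Fin r → ℕ) (k : ℕ) (hn : ∀ i, 1 ≤ n i)
    (h1 : ∀ i, a i = max (m i) (n i * b i))
    (h2 : ∀ i, k ≠ b i → c i = max k (b i))
    (h3 : ∀ i, k = b i → c i ≤ b i) :
    (∑ i, max (m i) (n i * c i)) ≤ max (∑ i, a i) k + ((∑ i, n i) - 1) * k := by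
  -- pointwise bound
  have key : ∀ i, max (m i) (n i * c i) ≤ max (a i) k + (n i - 1) * k := by
    intro i
    have hma : m i ≤ a i := by rw [h1 i]; exact le_max_left _ _
    have hnb : n i * b i ≤ a i := by rw [h1 i]; exact le_max_right _ _
    by_cases hk : k = b i
    · have hc : c i ≤ b i := h3 i hk
      have : n i * c i ≤ n i * b i := Nat.mul_le_mul_left _ hc
      have : n i * c i ≤ a i := le_trans this hnb
      have : max (m i) (n i * c i) ≤ a i := max_le hma this
      exact le_trans this (by omega)
    · have hc : c i = max k (b i) := h2 i hk
      by_cases hkb : k ≤ b i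
      · have : c i = b i := by rw [hc]; exact max_eq_right hkb
        have h4 : n i * c i ≤ a i := by rw [this]; exact hnb
        have : max (m i) (n i * c i) ≤ a i := max_le hma h4
        exact le_trans this (by omega)
      · have hck : c i = k := by rw [hc]; exact max_eq_left (by omega)
        have hnk : n i * k = k + (n i - 1) * k := bh_mul_split (n i) k (hn i)
        have hak : k ≤ max (a i) k := le_max_right _ _
        have hma' : m i ≤ max (a i) k := le_trans hma (le_max_left _ _)
        rw [hck]
        omega
  calc (∑ i, max (m i) (n i * c i))
      ≤ ∑ i, (max (a i) k + (n i - 1) * k) := Finset.sum_le_sum (fun i _ => key i)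
    _ = (∑ i, max (a i) k) + (∑ i, (n i - 1)) * k := by
        rw [Finset.sum_add_distrib, Finset.sum_mul]
    _ ≤ (max (∑ i, a i) k + (r - 1) * k) + (∑ i, (n i - 1)) * k := by
        gcongr; exact bh_sum_max_aux r hr a k
    _ ≤ max (∑ i, a i) k + ((∑ i, n i) - 1) * k := by
        have hsub : ∑ i, (n i - 1) = (∑ i, n i) - r := by
          have := Finset.sum_tsub_distrib (s := Finset.univ) (f := n)
            (g := fun _ => (1:ℕ)) (fun i _ => hn i)
          simpa using this
        have hrn : r ≤ ∑ i, n i := by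
          calc r = ∑ i : Fin r, (1:ℕ) := by simp
            _ ≤ ∑ i, n i := Finset.sum_le_sum (fun i _ => hn i)
        rw [hsub]
        have : (r - 1) + ((∑ i, n i) - r) = (∑ i, n i) - 1 := by omega
        rw [add_assoc, ← Nat.add_mul, this]
end

section
/- Let $r \geq 1$ and let $n_i \geq 1$, $a_i, m_i, b_i, c_i, k \geq 0$ be integers for $1 \leq i \leq r$ satisfying: (i) $a_i = \max\{m_i, n_i b_i\}$; (ii) $c_i = \max\{k, b_i\}$ whenever $k \neq b_i$; (iii) $c_i \leq b_i$ whenever $k = b_i$. If $k > \sum_{i=1}^r a_i$, then $\sum_{i=1}^r \max\{m_i, n_i c_i\} = \Big(\sum_{i=1}^r n_i\Big) k$. -/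
/-- If `k > ∑ aᵢ` then `∑ max{mᵢ, nᵢcᵢ} = (∑ nᵢ) k`. -/
theorem conductor_large_twist (r : ℕ) (hr : 1 ≤ r)
    (n a m b c : Fin r → ℕ) (k : ℕ) (hn : ∀ i, 1 ≤ n i)
    (h1 : ∀ i, a i = max (m i) (n i * b i))
    (h2 : ∀ i, k ≠ b i → c i = max k (b i))
    (h3 : ∀ i, k = b i → c i ≤ b i)
    (hk : (∑ i, a i) < k) :
    (∑ i, max (m i) (n i * c i)) = (∑ i, n i) * k := by
  rw [Finset.sum_mul]
  apply Finset.sum_congr rfl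
  intro i _
  have hak : a i < k :=
    lt_of_le_of_lt (Finset.single_le_sum (fun j _ => Nat.zero_le (a j)) (Finset.mem_univ i)) hk
  have hbk : b i < k := by
    calc b i ≤ n i * b i := Nat.le_mul_of_pos_left _ (hn i)
    _ ≤ a i := by rw [h1 i]; exact le_max_right _ _
    _ < k := hak
  have hmk : m i < k := by
    calc m i ≤ a i := by rw [h1 i]; exact le_max_left _ _
    _ < k := hak
  have hc : c i = k := by
    rw [h2 i (Nat.ne_of_gt hbk)]
    exact max_eq_left hbk.le
  rw [hc, max_eq_right]
  calc m i ≤ k := hmk.le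
  _ ≤ n i * k := Nat.le_mul_of_pos_left _ (hn i)
end
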